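/- Let T>0, 0<α<1, a₀>0. Assume a:ℝ→ℝ is Hölder continuous of order α, bounded, with a(t) ≥ a₀ for all t, and q:[0,T]→ℝ is essentially bounded. Let s ≥ 1 satisfy s < 1 + α/(1−α), and let c₀, A > 0. Then there exist constants C, K > 0, depending only on T, α, a₀, ‖a‖_{C^α}, ‖q‖_{L^∞}, s, c₀ and A (and independent of λ), such that for every λ ≥ 0, every continuous f:[0,T]→ℂ with |f(t)| ≤ c₀ e^{−A(1+λ)^{1/(2s)}} for all t, and every twice continuously differentiable v:[0,T]→ℂ satisfying v''(t) + λ a(t) v(t) + q(t) v(t) = f(t) on [0,T], one has (1+λ)|v(t)|² + |v'(t)|² ≤ C e^{K(1+λ)^{1/(2s)}} ( (1+λ)|v(0)|² + |v'(0)|² + 1 ) for all t ∈ [0,T]. -/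

import Mathlib

/-!
In the energy, replace the Hölder coefficient `a` by its average `b` over windows of length
`ε = (1 + λ)^(-1/2)`. Then `|b'| ≤ M ε^(α-1)` and `|b - a| ≤ M ε^α`, so both error terms in the
derivative of `E = (λ b + 1)|v|² + |v'|² + 1`, namely `λ b' |v|²` and `2 λ (b - a) Re(v̄ v')`,
cost a factor `M (1 + λ)^((1-α)/2)` times `E`. Gronwall then gives
`E(t) ≤ E(0) exp(C (1 + λ)^((1-α)/2) t)`, and `s < 1 + α/(1-α)` says exactly that
`(1-α)/2 ≤ 1/(2s)`.
-/

open Set MeasureTheory Real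
open scoped RealInnerProductSpace

theorem continuous_of_abs_sub_le_mul_rpow {f : ℝ → ℝ} {M α : ℝ} (hα : 0 < α)
    (hf : ∀ x y, |f x - f y| ≤ M * |x - y| ^ α) : Continuous f := by
  refine continuous_iff_continuousAt.2 fun y => tendsto_iff_norm_sub_tendsto_zero.2 ?_
  have hbound : Continuous fun x => M * |x - y| ^ α :=
    continuous_const.mul ((continuous_id.sub continuous_const).abs.rpow_const
      fun _ => Or.inr hα.le)
  refine squeeze_zero (fun _ => norm_nonneg _) (fun x => hf x y) ?_
  simpa [zero_rpow hα.ne'] using hbound.tendsto y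

theorem holder_const_nonneg {f : ℝ → ℝ} {M α : ℝ} (hf : ∀ x y, |f x - f y| ≤ M * |x - y| ^ α) :
    0 ≤ M := by
  simpa using (abs_nonneg _).trans (hf 1 0)

noncomputable def slidingAverage (a : ℝ → ℝ) (ε t : ℝ) : ℝ := (∫ u in t..t + ε, a u) / ε

section slidingAverage

variable {a : ℝ → ℝ} {ε : ℝ}

theorem hasDerivAt_slidingAverage (ha : Continuous a) (t : ℝ) :
    HasDerivAt (slidingAverage a ε) ((a (t + ε) - a t) / ε) t := by
  have hprim (x : ℝ) : HasDerivAt (fun y => ∫ u in (0 : ℝ)..y, a u) (a x) x :=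
    (ha.integral_hasStrictDerivAt 0 x).hasDerivAt
  have hdiff : slidingAverage a ε
      = fun y => ((∫ u in (0 : ℝ)..y + ε, a u) - ∫ u in (0 : ℝ)..y, a u) / ε := by
    funext y
    rw [slidingAverage, intervalIntegral.integral_interval_sub_left (ha.intervalIntegrable _ _)
      (ha.intervalIntegrable _ _)]
  rw [hdiff]
  exact (((hprim (t + ε)).comp_add_const t ε).sub (hprim t)).div_const ε

theorem le_slidingAverage {c t : ℝ} (hε : 0 < ε) (ha : IntervalIntegrable a volume t (t + ε))
    (h : ∀ u ∈ Icc t (t + ε), c ≤ a u) : c ≤ slidingAverage a ε t := by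
  rw [slidingAverage, le_div_iff₀ hε]
  simpa [mul_comm] using
    intervalIntegral.integral_mono_on (by linarith) intervalIntegrable_const ha h

theorem slidingAverage_le {c t : ℝ} (hε : 0 < ε) (ha : IntervalIntegrable a volume t (t + ε))
    (h : ∀ u ∈ Icc t (t + ε), a u ≤ c) : slidingAverage a ε t ≤ c := by
  rw [slidingAverage, div_le_iff₀ hε]
  simpa [mul_comm] using
    intervalIntegral.integral_mono_on (by linarith) ha intervalIntegrable_const h

theorem abs_slidingAverage_sub_le {K t : ℝ} (hε : 0 < ε)
    (ha : IntervalIntegrable a volume t (t + ε)) (h : ∀ u ∈ Ioc t (t + ε), |a u - a t| ≤ K) :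
    |slidingAverage a ε t - a t| ≤ K := by
  have hint : slidingAverage a ε t - a t = (∫ u in t..t + ε, (a u - a t)) / ε := by
    rw [intervalIntegral.integral_sub ha intervalIntegrable_const, slidingAverage]
    field_simp
    simp
  have hle := intervalIntegral.norm_integral_le_of_norm_le_const (a := t) (b := t + ε)
    (f := fun u => a u - a t)
    fun u hu => h u (by rwa [uIoc_of_le (by linarith : t ≤ t + ε)] at hu)
  rw [hint, abs_div, abs_of_pos hε, div_le_iff₀ hε]
  simpa [abs_of_pos hε] using hle

end slidingAverage

theorem two_mul_mul_le_sqrt_mul {lam x y : ℝ} (hlam : 0 ≤ lam) :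
    2 * lam * (x * y) ≤ √(1 + lam) * (lam * x ^ 2 + y ^ 2) := by
  obtain ⟨u, hu, rfl⟩ : ∃ u, 0 ≤ u ∧ lam = u ^ 2 := ⟨√lam, sqrt_nonneg _, (sq_sqrt hlam).symm⟩
  have hmono : u ≤ √(1 + u ^ 2) := le_sqrt_of_sq_le (by linarith)
  nlinarith [mul_nonneg hu (sq_nonneg (u * x - y)),
    mul_nonneg (sub_nonneg.2 hmono) (by positivity : 0 ≤ u ^ 2 * x ^ 2 + y ^ 2)]

theorem energy_rate_le {lam b m K Mq c₀ δ e q x y r φ : ℝ} (hlam : 0 ≤ lam) (hm0 : 0 < m)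
    (hm1 : m ≤ 1) (hmb : m ≤ b) (hr : |r| ≤ x * y) (hδ : |δ| ≤ K)
    (he : √(1 + lam) * |e| ≤ K) (hq : |q| ≤ Mq) (hφ : φ ≤ c₀ * y) :
    lam * δ * x ^ 2 + 2 * (lam * e + 1 - q) * r + 2 * φ
      ≤ (2 * K / m + 2 + Mq + c₀ ^ 2) * ((lam * b + 1) * x ^ 2 + y ^ 2 + 1) := by
  set E := (lam * b + 1) * x ^ 2 + y ^ 2 + 1
  set N := lam * x ^ 2 + y ^ 2
  have hK : 0 ≤ K := (abs_nonneg _).trans hδ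
  have hN : 0 ≤ N := by positivity
  have hlamx : 0 ≤ lam * x ^ 2 := by positivity
  have hmN : m * N ≤ E := by
    nlinarith [mul_le_mul_of_nonneg_right hmb hlamx, mul_le_mul_of_nonneg_right hm1 (sq_nonneg y)]
  have hxyE : x ^ 2 + y ^ 2 + 1 ≤ E := by nlinarith [mul_nonneg hlamx (hm0.le.trans hmb)]
  have hcoef : lam * δ * x ^ 2 ≤ K * N := by
    nlinarith [mul_le_mul_of_nonneg_right (le_of_abs_le hδ) hlamx]
  have hcomm : 2 * (lam * e) * r ≤ K * N := calc
    2 * (lam * e) * r ≤ |e| * (2 * lam * (x * y)) := by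
      nlinarith [mul_le_mul (le_abs_self (e * r)) le_rfl hlam (abs_nonneg _),
        abs_mul e r, mul_le_mul_of_nonneg_left hr (abs_nonneg e)]
    _ ≤ |e| * (√(1 + lam) * N) :=
      mul_le_mul_of_nonneg_left (two_mul_mul_le_sqrt_mul hlam) (abs_nonneg e)
    _ ≤ K * N := by nlinarith [mul_le_mul_of_nonneg_right he hN]
  have hpot : 2 * (1 - q) * r ≤ (1 + Mq) * E := by
    have h2r : 2 * |r| ≤ x ^ 2 + y ^ 2 := by nlinarith [sq_nonneg (x - y)]
    nlinarith [abs_le.1 hq, abs_le.1 hr, abs_nonneg r, neg_abs_le r, le_abs_self r,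
      mul_le_mul_of_nonneg_left hxyE ((abs_nonneg q).trans hq)]
  have hsrc : 2 * φ ≤ (1 + c₀ ^ 2) * E := by
    nlinarith [sq_nonneg (y - c₀), mul_nonneg (sq_nonneg c₀) (show 0 ≤ E - 1 by nlinarith)]
  have hKN : 2 * (K * N) ≤ 2 * K / m * E := by
    rw [div_mul_eq_mul_div, le_div_iff₀ hm0]; nlinarith [mul_le_mul_of_nonneg_left hmN hK]
  nlinarith

theorem le_mul_exp_of_hasDerivAt_le {f : ℝ → ℝ} {K a b : ℝ}
    (hf : ∀ x ∈ Icc a b, ∃ f', HasDerivAt f f' x ∧ f' ≤ K * f x) :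
    ∀ x ∈ Icc a b, f x ≤ f a * exp (K * (x - a)) := by
  choose! f' hderiv hbound using hf
  intro x hx
  simpa [gronwallBound_ε0] using le_gronwallBound_of_liminf_deriv_right_le (ε := 0)
    (fun y hy => (hderiv y hy).continuousAt.continuousWithinAt)
    (fun y hy _ hr => (hderiv y (Ico_subset_Icc_self hy)).hasDerivWithinAt.liminf_right_slope_le hr)
    le_rfl (fun y hy => by simpa using hbound y (Ico_subset_Icc_self hy)) x hx

section modeEnergy

variable {F : Type*} [NormedAddCommGroup F]

/-- The `+ 1` absorbs the source term: `2⟪v', f⟫ ≤ ‖v'‖² + ‖f‖²`. -/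
noncomputable def modeEnergy (lam : ℝ) (b : ℝ → ℝ) (v v' : ℝ → F) (t : ℝ) : ℝ :=
  (lam * b t + 1) * ‖v t‖ ^ 2 + ‖v' t‖ ^ 2 + 1

variable {lam : ℝ} {b : ℝ → ℝ} {v v' : ℝ → F} {t : ℝ}

theorem mul_le_modeEnergy {m : ℝ} (hlam : 0 ≤ lam) (hm1 : m ≤ 1) (hmb : m ≤ b t) :
    m * ((1 + lam) * ‖v t‖ ^ 2 + ‖v' t‖ ^ 2) ≤ modeEnergy lam b v v' t := by
  have hcoef : m * (1 + lam) ≤ lam * b t + 1 := by nlinarith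
  rw [modeEnergy]
  nlinarith [mul_le_mul_of_nonneg_right hcoef (sq_nonneg ‖v t‖),
    mul_le_mul_of_nonneg_right hm1 (sq_nonneg ‖v' t‖)]

theorem modeEnergy_le_mul {B : ℝ} (hlam : 0 ≤ lam) (hB1 : 1 ≤ B) (hbB : b t ≤ B) :
    modeEnergy lam b v v' t ≤ B * ((1 + lam) * ‖v t‖ ^ 2 + ‖v' t‖ ^ 2 + 1) := by
  have hcoef : lam * b t + 1 ≤ B * (1 + lam) := by nlinarith
  rw [modeEnergy]
  nlinarith [mul_le_mul_of_nonneg_right hcoef (sq_nonneg ‖v t‖),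
    mul_le_mul_of_nonneg_right hB1 (sq_nonneg ‖v' t‖)]

variable [InnerProductSpace ℝ F]

theorem hasDerivAt_modeEnergy {δ : ℝ} {w : F} (hb : HasDerivAt b δ t)
    (hv : HasDerivAt v (v' t) t) (hv' : HasDerivAt v' w t) :
    HasDerivAt (modeEnergy lam b v v')
      (lam * δ * ‖v t‖ ^ 2 + (lam * b t + 1) * (2 * ⟪v t, v' t⟫) + 2 * ⟪v' t, w⟫) t := by
  have hcoef : HasDerivAt (fun τ => lam * b τ + 1) (lam * δ) t := (hb.const_mul lam).add_const 1
  exact ((hcoef.mul hv.norm_sq).add hv'.norm_sq).add_const 1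

theorem modeEnergy_hasDerivAt_le {m K Mq c₀ δ c q : ℝ} {w g : F} (hlam : 0 ≤ lam) (hm0 : 0 < m)
    (hm1 : m ≤ 1) (hmb : m ≤ b t) (hb : HasDerivAt b δ t) (hv : HasDerivAt v (v' t) t)
    (hv' : HasDerivAt v' w t) (hode : w = g - (lam * c + q) • v t) (hδ : |δ| ≤ K)
    (hbc : √(1 + lam) * |b t - c| ≤ K) (hq : |q| ≤ Mq) (hg : ‖g‖ ≤ c₀) :
    ∃ E', HasDerivAt (modeEnergy lam b v v') E' t ∧
      E' ≤ (2 * K / m + 2 + Mq + c₀ ^ 2) * modeEnergy lam b v v' t := by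
  refine ⟨_, hasDerivAt_modeEnergy hb hv hv', ?_⟩
  have hsource : ⟪v' t, g⟫ ≤ c₀ * ‖v' t‖ :=
    (real_inner_le_norm _ _).trans (by rw [mul_comm]; gcongr)
  calc _ = lam * δ * ‖v t‖ ^ 2 + 2 * (lam * (b t - c) + 1 - q) * ⟪v t, v' t⟫
        + 2 * ⟪v' t, g⟫ := by
        rw [hode, inner_sub_right, real_inner_smul_right, real_inner_comm (v t)]; ring
    _ ≤ _ := energy_rate_le hlam hm0 hm1 hmb (abs_real_inner_le_norm _ _) hδ hbc hq hsource

end modeEnergy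

theorem energy_le_mul_exp_of_holder {a q : ℝ → ℝ} {f v v' v'' : ℝ → ℂ}
    {lam ε α M m B K Mq c₀ T : ℝ} (hlam : 0 ≤ lam) (hε : 0 < ε) (hα : 0 < α) (hm0 : 0 < m)
    (hm1 : m ≤ 1) (hB1 : 1 ≤ B) (hma : ∀ t, m ≤ a t) (haB : ∀ t, a t ≤ B)
    (hHol : ∀ t u, |a t - a u| ≤ M * |t - u| ^ α)
    (hKderiv : M * ε ^ α / ε ≤ K) (hKdev : √(1 + lam) * (M * ε ^ α) ≤ K)
    (hq : ∀ t ∈ Icc (0:ℝ) T, |q t| ≤ Mq) (hf : ∀ t ∈ Icc (0:ℝ) T, ‖f t‖ ≤ c₀)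
    (hv : ∀ t ∈ Icc (0:ℝ) T, HasDerivAt v (v' t) t)
    (hv' : ∀ t ∈ Icc (0:ℝ) T, HasDerivAt v' (v'' t) t)
    (hode : ∀ t ∈ Icc (0:ℝ) T, v'' t + (lam : ℂ) * (a t : ℂ) * v t + (q t : ℂ) * v t = f t) :
    ∀ t ∈ Icc (0:ℝ) T, m * ((1 + lam) * ‖v t‖ ^ 2 + ‖v' t‖ ^ 2) ≤
      B * ((1 + lam) * ‖v 0‖ ^ 2 + ‖v' 0‖ ^ 2 + 1) * exp ((2 * K / m + 2 + Mq + c₀ ^ 2) * t) := by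
  have ha := continuous_of_abs_sub_le_mul_rpow hα hHol
  have hmb (t : ℝ) : m ≤ slidingAverage a ε t :=
    le_slidingAverage hε (ha.intervalIntegrable _ _) fun u _ => hma u
  have hwindow (t u : ℝ) (hu : u ∈ Ioc t (t + ε)) : |a u - a t| ≤ M * ε ^ α :=
    (hHol u t).trans <| mul_le_mul_of_nonneg_left
      (rpow_le_rpow (abs_nonneg _) (abs_le.2 ⟨by linarith [hu.1], by linarith [hu.2]⟩) hα.le)
      (holder_const_nonneg hHol)
  have hderiv (t : ℝ) : |(a (t + ε) - a t) / ε| ≤ K := by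
    rw [abs_div, abs_of_pos hε]
    exact (div_le_div_of_nonneg_right (hwindow t (t + ε) ⟨by linarith, le_rfl⟩) hε.le).trans
      hKderiv
  have hdev (t : ℝ) : √(1 + lam) * |slidingAverage a ε t - a t| ≤ K :=
    (mul_le_mul_of_nonneg_left (abs_slidingAverage_sub_le hε (ha.intervalIntegrable _ _)
      (hwindow t)) (sqrt_nonneg _)).trans hKdev
  have hode' (t : ℝ) (ht : t ∈ Icc (0:ℝ) T) : v'' t = f t - (lam * a t + q t) • v t := by
    rw [Complex.real_smul]; push_cast; linear_combination hode t ht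
  have hgronwall := le_mul_exp_of_hasDerivAt_le fun t ht =>
    modeEnergy_hasDerivAt_le hlam hm0 hm1 (hmb t) (hasDerivAt_slidingAverage ha t) (hv t ht)
      (hv' t ht) (hode' t ht) (hderiv t) (hdev t) (hq t ht) (hf t ht)
  intro t ht
  calc _ ≤ modeEnergy lam (slidingAverage a ε) v v' t := mul_le_modeEnergy hlam hm1 (hmb t)
    _ ≤ modeEnergy lam (slidingAverage a ε) v v' 0 * exp ((2 * K / m + 2 + Mq + c₀ ^ 2) * t) := by
      simpa using hgronwall t ht
    _ ≤ _ := by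
      refine mul_le_mul_of_nonneg_right (modeEnergy_le_mul hlam hB1 ?_) (exp_pos _).le
      exact slidingAverage_le hε (ha.intervalIntegrable _ _) fun u _ => haB u

theorem rpow_neg_half_rpow_div_self {μ α : ℝ} (hμ : 0 < μ) :
    (μ ^ (-(1 / 2) : ℝ)) ^ α / μ ^ (-(1 / 2) : ℝ) = μ ^ ((1 - α) / 2) := by
  rw [← rpow_mul hμ.le, ← rpow_sub hμ]; ring_nf

theorem sqrt_mul_rpow_neg_half_rpow {μ α : ℝ} (hμ : 0 < μ) :
    √μ * (μ ^ (-(1 / 2) : ℝ)) ^ α = μ ^ ((1 - α) / 2) := by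
  rw [sqrt_eq_rpow, ← rpow_mul hμ.le, ← rpow_add hμ]; ring_nf

theorem one_sub_div_two_le_one_div_two_mul {α s : ℝ} (hs : 0 < s) (hα1 : α < 1)
    (hs2 : s < 1 + α / (1 - α)) : (1 - α) / 2 ≤ 1 / (2 * s) := by
  have h1α : 0 < 1 - α := by linarith
  have hs' : s * (1 - α) < 1 := by
    rwa [show 1 + α / (1 - α) = 1 / (1 - α) by field_simp; ring, lt_div_iff₀ h1α] at hs2
  rw [div_le_div_iff₀ two_pos (by positivity)]
  nlinarith

/-- Case 2 Fourier-mode energy estimate: Hölder continuous speed bounded away from zero,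
yielding Gevrey-order-`s` well-posedness for `1 ≤ s < 1 + α/(1-α)`. -/
theorem gevrey_energy_estimate_holder_nondegenerate
    (T α a₀ M Ma Mq s c₀ A : ℝ) (hT : 0 < T) (hα0 : 0 < α) (hα1 : α < 1) (ha₀ : 0 < a₀)
    (a q : ℝ → ℝ)
    (hHol : ∀ t u : ℝ, |a t - a u| ≤ M * |t - u| ^ α)
    (ha_bd : ∀ t, |a t| ≤ Ma)
    (ha_low : ∀ t, a₀ ≤ a t)
    (hq_bd : ∀ t ∈ Icc (0:ℝ) T, |q t| ≤ Mq)
    (hs1 : 1 ≤ s) (hs2 : s < 1 + α / (1 - α))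
    (hc₀ : 0 < c₀) (hA : 0 < A) :
    ∃ C > 0, ∃ K > 0, ∀ lam : ℝ, 0 ≤ lam → ∀ f v v' v'' : ℝ → ℂ,
      ContinuousOn f (Icc (0:ℝ) T) →
      (∀ t ∈ Icc (0:ℝ) T, ‖f t‖ ≤ c₀ * Real.exp (-A * (1 + lam) ^ (1 / (2 * s)))) →
      (∀ t ∈ Icc (0:ℝ) T, HasDerivAt v (v' t) t) →
      (∀ t ∈ Icc (0:ℝ) T, HasDerivAt v' (v'' t) t) →
      ContinuousOn v'' (Icc (0:ℝ) T) →
      (∀ t ∈ Icc (0:ℝ) T, v'' t + (lam : ℂ) * (a t : ℂ) * v t + (q t : ℂ) * v t = f t) →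
      ∀ t ∈ Icc (0:ℝ) T,
        (1 + lam) * ‖v t‖ ^ 2 + ‖v' t‖ ^ 2 ≤
          C * Real.exp (K * (1 + lam) ^ (1 / (2 * s))) *
            ((1 + lam) * ‖v 0‖ ^ 2 + ‖v' 0‖ ^ 2 + 1) := by
  have hM0 := holder_const_nonneg hHol
  have hMq0 : 0 ≤ Mq := (abs_nonneg _).trans (hq_bd 0 ⟨le_rfl, hT.le⟩)
  have hm0 : 0 < min a₀ 1 := lt_min ha₀ one_pos
  set Q := 2 * M / min a₀ 1 + 2 + Mq + c₀ ^ 2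
  refine ⟨max Ma 1 / min a₀ 1, by positivity, Q * T, by positivity, ?_⟩
  intro lam hlam f v v' v'' _ hfb hv hv' _ hode t ht
  have hμ : 0 < 1 + lam := by linarith
  set D := (1 + lam) ^ ((1 - α) / 2)
  set D' := (1 + lam) ^ (1 / (2 * s))
  have hDD' : D ≤ D' := rpow_le_rpow_of_exponent_le (by linarith)
    (one_sub_div_two_le_one_div_two_mul (by linarith) hα1 hs2)
  have hD' : 1 ≤ D' := one_le_rpow (by linarith) (by positivity)
  have hf (t : ℝ) (ht : t ∈ Icc (0:ℝ) T) : ‖f t‖ ≤ c₀ := (hfb t ht).trans <|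
    mul_le_of_le_one_right hc₀.le (exp_le_one_iff.2 (by nlinarith))
  have hgrowth := energy_le_mul_exp_of_holder (K := M * D) hlam (rpow_pos_of_pos hμ _) hα0 hm0
    (min_le_right _ _) (le_max_right _ _) (fun t => (min_le_left _ _).trans (ha_low t))
    (fun t => (le_abs_self _).trans ((ha_bd t).trans (le_max_left _ _))) hHol
    (by rw [mul_div_assoc, rpow_neg_half_rpow_div_self hμ])
    (by rw [mul_left_comm, sqrt_mul_rpow_neg_half_rpow hμ]) hq_bd hf hv hv' hode t ht
  have hrate : (2 * (M * D) / min a₀ 1 + 2 + Mq + c₀ ^ 2) * t ≤ Q * T * D' := by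
    have hsrc : 2 + Mq + c₀ ^ 2 ≤ (2 + Mq + c₀ ^ 2) * D' :=
      le_mul_of_one_le_right (by positivity) hD'
    calc _ = (2 * M / min a₀ 1 * D + (2 + Mq + c₀ ^ 2)) * t := by ring
      _ ≤ (2 * M / min a₀ 1 * D' + (2 + Mq + c₀ ^ 2) * D') * t := by gcongr; exact ht.1
      _ ≤ (2 * M / min a₀ 1 * D' + (2 + Mq + c₀ ^ 2) * D') * T := by gcongr; exact ht.2
      _ = Q * T * D' := by ring
  rw [div_mul_eq_mul_div, div_mul_eq_mul_div, le_div_iff₀ hm0, mul_comm]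
  calc _ ≤ _ := hgrowth
    _ ≤ max Ma 1 * ((1 + lam) * ‖v 0‖ ^ 2 + ‖v' 0‖ ^ 2 + 1) * exp (Q * T * D') := by gcongr
    _ = _ := by ring
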